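/- Let f ∈ F be a boundary vertex of an internal component C of T \ F. If parent_F(f) exists, then r_C is the child of parent_F(f) in T that is an ancestor of f; otherwise r_C = r. -/
import Mathlib


variable {n : ℕ}

/-- `Anc p v u` : `v` is an ancestor of `u` in the rooted tree with parent function `p`
(every vertex is an ancestor of itself). -/
def Anc (p : Fin n → Fin n) (v u : Fin n) : Prop :=
  Relation.ReflTransGen (fun a b => p a = b) u v

/-- `ND p v` : the number of descendants of `v` (including `v`). -/
noncomputable def ND (p : Fin n → Fin n) (v : Fin n) : ℕ :=
  Set.ncard {u | Anc p v u}

/-- `InComp p F v u` : `u` lies in the same connected component of `T \ F` as `v`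
(connectivity via tree edges avoiding the failed set `F`). -/
def InComp (p : Fin n → Fin n) (F : Set (Fin n)) (v u : Fin n) : Prop :=
  Relation.ReflTransGen (fun a b => a ∉ F ∧ b ∉ F ∧ (p a = b ∨ p b = a)) v u

/-- `ρ` is the root of its connected component of `T \ F`:
`ρ` is non-failed and an ancestor of every vertex of its component. -/
def IsCompRoot (p : Fin n → Fin n) (F : Set (Fin n)) (ρ : Fin n) : Prop :=
  ρ ∉ F ∧ ∀ u, InComp p F ρ u → Anc p ρ u

/-- The component rooted at `ρ` is internal: some failed vertex is a descendant of `ρ`. -/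
def Internal (p : Fin n → Fin n) (F : Set (Fin n)) (ρ : Fin n) : Prop :=
  ∃ f ∈ F, Anc p ρ f

/-- `b` is a boundary vertex of the component of `T \ F` rooted at `ρ`. -/
def Boundary (p : Fin n → Fin n) (F : Set (Fin n)) (ρ b : Fin n) : Prop :=
  b ∈ F ∧ InComp p F ρ (p b)

/-- `(x, y)` is a back-edge: a non-tree edge of `G` with `y` an ancestor of `x`. -/
def IsBack (G : SimpleGraph (Fin n)) (p : Fin n → Fin n) (x y : Fin n) : Prop :=
  G.Adj x y ∧ Anc p y x ∧ p x ≠ y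

/-- The set of lower endpoints `y < v` of back-edges whose upper endpoint is a
descendant of `v`. -/
def LowSet (G : SimpleGraph (Fin n)) (p : Fin n → Fin n) (v : Fin n) : Set (Fin n) :=
  {y | (∃ x, Anc p v x ∧ IsBack G p x y) ∧ y < v}

/-- `IsLow G p k v y` : `y = low_k(v)`, i.e. `y` is the `k`-th smallest element of
`LowSet G p v` (for `k ≥ 1`). -/
def IsLow (G : SimpleGraph (Fin n)) (p : Fin n → Fin n) (k : ℕ) (v y : Fin n) : Prop :=
  y ∈ LowSet G p v ∧ Set.ncard {z ∈ LowSet G p v | z < y} = k - 1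

/-- `a` and `b` are connected in `G \ F`. -/
def ConnGF (G : SimpleGraph (Fin n)) (F : Set (Fin n)) (a b : Fin n) : Prop :=
  Relation.ReflTransGen (fun u w => G.Adj u w ∧ u ∉ F ∧ w ∉ F) a b

/-- `g = parent_F(f)` : `g` is the nearest (deepest) proper ancestor of `f` lying in `F`. -/
def NearestF (p : Fin n → Fin n) (F : Set (Fin n)) (f g : Fin n) : Prop :=
  g ∈ F ∧ Anc p g f ∧ g ≠ f ∧ ∀ g' ∈ F, Anc p g' f → g' ≠ f → Anc p g' g

section Aux

variable {p : Fin n → Fin n} {r : Fin n}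

private lemma p_le (hpr : p r = r) (hplt : ∀ v, v ≠ r → p v < v) (b : Fin n) :
    p b ≤ b := by
  by_cases hb : b = r
  · subst hb; rw [hpr]
  · exact (hplt b hb).le

private lemma le_of_anc (hpr : p r = r) (hplt : ∀ v, v ≠ r → p v < v)
    {v u : Fin n} (h : Anc p v u) : v ≤ u := by
  unfold Anc at h
  induction h with
  | refl => exact le_refl _
  | tail _ hstep ih => exact hstep ▸ (p_le hpr hplt _).trans ih

private lemma anc_antisymm (hpr : p r = r) (hplt : ∀ v, v ≠ r → p v < v)
    {v u : Fin n} (h1 : Anc p v u) (h2 : Anc p u v) : v = u :=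
  le_antisymm (le_of_anc hpr hplt h1) (le_of_anc hpr hplt h2)

private lemma anc_step {v u : Fin n} (h : Anc p v u) (hne : v ≠ u) :
    Anc p v (p u) := by
  rcases Relation.ReflTransGen.cases_head h with h | ⟨c, hc, h'⟩
  · exact absurd h.symm hne
  · exact hc ▸ h'

private lemma anc_comp {u v w : Fin n} (hv : Anc p v u) (hw : Anc p w u) :
    Anc p v w ∨ Anc p w v := by
  unfold Anc at hv
  revert hw
  induction hv using Relation.ReflTransGen.head_induction_on with
  | refl => exact fun hw => Or.inr hw
  | head h' h ih =>
    intro hw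
    rcases Relation.ReflTransGen.cases_head hw with haw | ⟨d, hd, h''⟩
    · exact Or.inl (haw ▸ Relation.ReflTransGen.head h' h)
    · exact ih (h' ▸ hd ▸ h'')

variable {F : Set (Fin n)} {ρ : Fin n}

/-- Every vertex of ρ's component is linked to ρ by an F-avoiding ancestor chain. -/
private lemma incomp_avoid (hpr : p r = r) (hplt : ∀ v, v ≠ r → p v < v)
    (hρ : IsCompRoot p F ρ) {u : Fin n} (h : InComp p F ρ u) :
    Relation.ReflTransGen (fun x y => x ∉ F ∧ p x = y) u ρ := by
  unfold InComp at h
  induction h with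
  | refl => exact Relation.ReflTransGen.refl
  | tail hb hbc ih =>
    rename_i a b
    obtain ⟨haF, hbF, hor⟩ := hbc
    rcases hor with hpa | hpb
    · by_cases hra : a = ρ
      · have hIb : InComp p F ρ b := by
          refine Relation.ReflTransGen.single ⟨?_, hbF, Or.inl ?_⟩
          · rw [← hra]; exact haF
          · rw [← hra]; exact hpa
        have hanc : Anc p ρ b := hρ.2 b hIb
        have h1 : ρ ≤ b := le_of_anc hpr hplt hanc
        have h2 : b ≤ ρ := by rw [← hpa, hra]; exact p_le hpr hplt ρ
        have hbρ : b = ρ := le_antisymm h2 h1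
        rw [hbρ]
      · rcases Relation.ReflTransGen.cases_head ih with h | ⟨c, hc, h'⟩
        · exact absurd h hra
        · have : c = b := by rw [← hc.2, hpa]
          exact this ▸ h'
    · exact Relation.ReflTransGen.head ⟨hbF, hpb⟩ ih

/-- Any vertex between `u` and `ρ` on the ancestor chain of an avoid-path is non-failed. -/
private lemma avoid_mem (hpr : p r = r) (hplt : ∀ v, v ≠ r → p v < v)
    (hρF : ρ ∉ F) {u v : Fin n}
    (hav : Relation.ReflTransGen (fun x y => x ∉ F ∧ p x = y) u ρ)
    (hvu : Anc p v u) (hρv : Anc p ρ v) : v ∉ F := by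
  revert hvu
  induction hav using Relation.ReflTransGen.head_induction_on with
  | refl =>
    intro hvu
    have : v = ρ := anc_antisymm hpr hplt hvu hρv
    exact this ▸ hρF
  | head h' h ih =>
    rename_i a c
    intro hvu
    by_cases hva : v = a
    · exact hva ▸ h'.1
    · exact ih (h'.2 ▸ anc_step hvu hva)

end Aux

/-- Let `f ∈ F` be a boundary vertex of an internal component `C` of `T \ F`.
If `parent_F(f)` exists, then `r_C` is the child of `parent_F(f)` that is an
ancestor of `f`; otherwise `r_C = r`. -/
theorem stmt8
    (G : SimpleGraph (Fin n)) (p : Fin n → Fin n) (r : Fin n)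
    (hG : G.Connected)
    (hpr : p r = r) (hplt : ∀ v, v ≠ r → p v < v) (hroot : ∀ v, Anc p r v)
    (hspan : ∀ v, v ≠ r → G.Adj (p v) v)
    (hdfs : ∀ x y, G.Adj x y → Anc p x y ∨ Anc p y x)
    (hpre : ∀ u v w : Fin n, u < v → v < w → Anc p u w → Anc p u v)
    (F : Set (Fin n)) (hrF : r ∉ F)
    (ρ : Fin n) (hρ : IsCompRoot p F ρ) (hint : Internal p F ρ)
    (f : Fin n) (hf : f ∈ F) (hb : Boundary p F ρ f) :
    (∀ g, NearestF p F f g → p ρ = g ∧ Anc p ρ f) ∧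
    ((¬ ∃ g, NearestF p F f g) → ρ = r) := by
  obtain ⟨hρF, hρanc⟩ := hρ
  obtain ⟨hfF, hInc⟩ := hb
  have hfr : f ≠ r := fun h => hrF (h ▸ hf)
  have hApf : Anc p ρ (p f) := hρanc _ hInc
  have hAρf : Anc p ρ f := Relation.ReflTransGen.head rfl hApf
  have hav := incomp_avoid hpr hplt ⟨hρF, hρanc⟩ hInc
  -- if p ρ ∉ F then ρ = r
  have hkey : p ρ ∉ F → ρ = r := by
    intro hpρF
    by_contra hρr
    have hIpρ : InComp p F ρ (p ρ) :=
      Relation.ReflTransGen.single ⟨hρF, hpρF, Or.inl rfl⟩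
    have h1 : ρ ≤ p ρ := le_of_anc hpr hplt (hρanc _ hIpρ)
    exact absurd h1 (not_le.mpr (hplt ρ hρr))
  -- if p ρ ∈ F then it is a failed proper ancestor of f
  have hpρf : Anc p (p ρ) f := hAρf.tail rfl
  have hpρltf : p ρ < f :=
    lt_of_le_of_lt ((p_le hpr hplt ρ).trans (le_of_anc hpr hplt hApf)) (hplt f hfr)
  constructor
  · intro g hg
    obtain ⟨hgF, hgf, hgne, hgmax⟩ := hg
    refine ⟨?_, hAρf⟩
    have hgpf : Anc p g (p f) := anc_step hgf hgne
    rcases anc_comp hApf hgpf with hρg | hgρ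
    · exact absurd (avoid_mem hpr hplt hρF hav hgpf hρg) (not_not.mpr hgF)
    · have hgρne : g ≠ ρ := fun h => hρF (h ▸ hgF)
      have hgpρ : Anc p g (p ρ) := anc_step hgρ hgρne
      by_cases hpρF : p ρ ∈ F
      · have hm : Anc p (p ρ) g := hgmax (p ρ) hpρF hpρf (ne_of_lt hpρltf)
        exact (anc_antisymm hpr hplt hgpρ hm).symm
      · -- then ρ = r, so g is an ancestor of r, hence g = r ∈ F, contradiction
        have hρr := hkey hpρF
        have hgr : g ≤ r := le_of_anc hpr hplt (hρr ▸ hgρ)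
        have hrg : r ≤ g := le_of_anc hpr hplt (hroot g)
        exact absurd (le_antisymm hrg hgr ▸ hgF) hrF
  · intro hne
    by_contra hρr
    have hpρF : p ρ ∈ F := by
      by_contra h; exact hρr (hkey h)
    -- build the nearest failed ancestor: the maximum failed proper ancestor of f
    exfalso
    set S : Set (Fin n) := {x | x ∈ F ∧ Anc p x f ∧ x ≠ f} with hS
    have hpρS : p ρ ∈ S := ⟨hpρF, hpρf, ne_of_lt hpρltf⟩
    have hfin : S.Finite := Set.toFinite S
    have hnonempty : hfin.toFinset.Nonempty := ⟨p ρ, hfin.mem_toFinset.mpr hpρS⟩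
    set g := hfin.toFinset.max' hnonempty with hgdef
    have hgS : g ∈ S := hfin.mem_toFinset.mp (hfin.toFinset.max'_mem hnonempty)
    refine hne ⟨g, hgS.1, hgS.2.1, hgS.2.2, ?_⟩
    intro g' hg'F hg'f hg'ne
    rcases anc_comp hg'f hgS.2.1 with h | h
    · exact h
    · have h1 : g ≤ g' := le_of_anc hpr hplt h
      have h2 : g' ≤ g := hfin.toFinset.le_max' g' (hfin.mem_toFinset.mpr ⟨hg'F, hg'f, hg'ne⟩)
      exact le_antisymm h1 h2 ▸ Relation.ReflTransGen.refl
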